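/- A balanced basic sequent is inhabited: it admits a cut-free, identity-free unit-only MLL proof (equivalently, a correct linking). -/

import Mathlib

namespace MLL

/-- Formulas of unit-only MLL, with every connective and unit occurrence
carrying a name (a natural number). -/
inductive Formula : Type
  | one : ℕ → Formula
  | bot : ℕ → Formula
  | parr : ℕ → Formula → Formula → Formula
  | tens : ℕ → Formula → Formula → Formula
deriving DecidableEq

namespace Formula

/-- The name of the root connective/unit of a formula. -/
def name : Formula → ℕ
  | one n => n
  | bot n => n
  | parr n _ _ => n
  | tens n _ _ => n

/-- All names occurring in a formula. -/
def names : Formula → Finset ℕ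
  | one n => {n}
  | bot n => {n}
  | parr n A B => insert n (A.names ∪ B.names)
  | tens n A B => insert n (A.names ∪ B.names)

/-- All subformula occurrences of a formula. -/
def subs : Formula → List Formula
  | one n => [one n]
  | bot n => [bot n]
  | parr n A B => parr n A B :: (A.subs ++ B.subs)
  | tens n A B => tens n A B :: (A.subs ++ B.subs)

end Formula

/-- A sequent is a multiset of (named) formulas. -/
abbrev Sequent := Multiset Formula

/-- The names occurring in a sequent. -/
def seqNames (Γ : Sequent) : Finset ℕ := (Γ.map Formula.names).sup

/-- The subformula occurrences of a sequent. -/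
def seqSubs (Γ : Sequent) : Multiset Formula :=
  Γ.bind (fun A => (A.subs : Multiset Formula))

/-- `A` is a subformula occurrence of `Γ`. -/
def HasSub (Γ : Sequent) (A : Formula) : Prop := A ∈ seqSubs Γ

/-- `a` is the name of a `⊥`-occurrence of `Γ`. -/
def IsBotName (Γ : Sequent) (a : ℕ) : Prop := HasSub Γ (.bot a)

/-- `a` is the name of a `1`-occurrence of `Γ`. -/
def IsOneName (Γ : Sequent) (a : ℕ) : Prop := HasSub Γ (.one a)

/-- The sequent is well-named: all occurrences carry pairwise distinct names. -/
def WellNamed (Γ : Sequent) : Prop := ((seqSubs Γ).map Formula.name).Nodup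

/-- A linking: a function assigning to (the name of) each `⊥`-occurrence
a target name (the jump). -/
abbrev Linking := ℕ → ℕ

/-- A switching: a choice of left/right for each par occurrence. -/
abbrev Switching := ℕ → Bool

/-- The linking sends (names of) `⊥`-occurrences to names of `Γ`. -/
def ValidLinking (Γ : Sequent) (lk : Linking) : Prop :=
  ∀ a, IsBotName Γ a → lk a ∈ seqNames Γ

/-- The edges of the switching graph for `Γ`, `lk` and the switching `σ`. -/
def switchAdj (Γ : Sequent) (lk : Linking) (σ : Switching) (x y : ℕ) : Prop :=
  (∃ A B, HasSub Γ (.tens x A B) ∧ (y = A.name ∨ y = B.name)) ∨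
  (∃ A B, HasSub Γ (.parr x A B) ∧ y = (if σ x then A.name else B.name)) ∨
  (IsBotName Γ x ∧ y = lk x)

/-- The switching graph for `Γ`, `lk` and `σ`. -/
def switchGraph (Γ : Sequent) (lk : Linking) (σ : Switching) : SimpleGraph ℕ :=
  SimpleGraph.fromRel (switchAdj Γ lk σ)

/-- Correctness of a linking: every switching graph (restricted to the names of `Γ`)
is acyclic and connected, i.e. a tree.  `(Γ, lk)` is a proof net iff `Correct Γ lk`. -/
def Correct (Γ : Sequent) (lk : Linking) : Prop :=
  ValidLinking Γ lk ∧
  ∀ σ : Switching, ((switchGraph Γ lk σ).induce {x : ℕ | x ∈ seqNames Γ}).IsTree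

/-- All jumps of the linking target `1`-occurrences. -/
def TargetsOnes (Γ : Sequent) (lk : Linking) : Prop :=
  ∀ a, IsBotName Γ a → IsOneName Γ (lk a)

/-- Two correct linkings describe the same proof net (they agree on all jumps). -/
def SameNet (Γ : Sequent) (lk lk' : Linking) : Prop :=
  Correct Γ lk ∧ Correct Γ lk' ∧ ∀ a, IsBotName Γ a → lk a = lk' a

/-- A rewiring step between proof nets: the target of exactly one jump is changed. -/
def Rewire (Γ : Sequent) (lk lk' : Linking) : Prop :=
  Correct Γ lk ∧ Correct Γ lk' ∧
  ∃ a, IsBotName Γ a ∧ lk a ≠ lk' a ∧ ∀ b, IsBotName Γ b → b ≠ a → lk b = lk' b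

/-- Equivalence of proof nets over `Γ`: the equivalence relation generated by rewiring. -/
def NetEquiv (Γ : Sequent) : Linking → Linking → Prop :=
  Relation.EqvGen (fun lk lk' => SameNet Γ lk lk' ∨ Rewire Γ lk lk')

end MLL

namespace MLL

/-- Cut-free, identity-free sequent proofs of unit-only MLL. -/
inductive Proof : Sequent → Type
  | one (n : ℕ) : Proof {Formula.one n}
  | bot (n : ℕ) {Γ : Sequent} : Proof Γ → Proof (Formula.bot n ::ₘ Γ)
  | parr (n : ℕ) {Γ : Sequent} {A B : Formula} :
      Proof (A ::ₘ B ::ₘ Γ) → Proof (Formula.parr n A B ::ₘ Γ)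
  | tens (n : ℕ) {Γ Δ : Sequent} {A B : Formula} :
      Proof (A ::ₘ Γ) → Proof (B ::ₘ Δ) → Proof (Formula.tens n A B ::ₘ (Γ + Δ))

/-- The translation relation `Π ⇒ λ` from proofs to linkings: for each
`⊥`-occurrence named `a`, `λ a` is a name in the context of the `(⊥)`-inference
introducing `a`. -/
inductive Translates : {Γ : Sequent} → Proof Γ → Linking → Prop
  | one {n : ℕ} {lk : Linking} : Translates (Proof.one n) lk
  | bot {Γ : Sequent} {n : ℕ} {π : Proof Γ} {lk : Linking} :
      lk n ∈ seqNames Γ → Translates π lk → Translates (Proof.bot n π) lk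
  | parr {Γ : Sequent} {A B : Formula} {n : ℕ} {π : Proof (A ::ₘ B ::ₘ Γ)} {lk : Linking} :
      Translates π lk → Translates (Proof.parr n π) lk
  | tens {Γ Δ : Sequent} {A B : Formula} {n : ℕ} {π₁ : Proof (A ::ₘ Γ)}
      {π₂ : Proof (B ::ₘ Δ)} {lk : Linking} :
      Translates π₁ lk → Translates π₂ lk → Translates (Proof.tens n π₁ π₂) lk

end MLL

namespace MLL

/-- The number of `⊥`-occurrences of a formula. -/
def Formula.botCount : Formula → ℕ
  | .one _ => 0
  | .bot _ => 1
  | .parr _ A B => A.botCount + B.botCount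
  | .tens _ A B => A.botCount + B.botCount

/-- The number of `⅋`-occurrences of a formula. -/
def Formula.parrCount : Formula → ℕ
  | .one _ => 0
  | .bot _ => 0
  | .parr _ A B => A.parrCount + B.parrCount + 1
  | .tens _ A B => A.parrCount + B.parrCount

/-- The balance of a sequent: the number of `⊥`s minus the number of `⅋`s
minus the number of commas (a sequent of `k` formulas has `k - 1` commas). -/
def balance (Γ : Sequent) : ℤ :=
  ((Γ.map Formula.botCount).sum : ℤ) - ((Γ.map Formula.parrCount).sum : ℤ)
    - ((Multiset.card Γ : ℤ) - 1)

end MLL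

namespace MLL

/-- A basic formula: built only from `1`, `⊥` and `⊗`. -/
def IsBasicFormula : Formula → Prop
  | .one _ => True
  | .bot _ => True
  | .parr _ _ _ => False
  | .tens _ A B => IsBasicFormula A ∧ IsBasicFormula B

/-- A basic sequent: all its formulas are built only from `1`, `⊥` and `⊗`. -/
def IsBasic (Γ : Sequent) : Prop := ∀ A ∈ Γ, IsBasicFormula A

/-- A tensor-formula `⊗(⊥^n)` with `n ≥ 2`: a (binary) tensor tree of `⊥`s. -/
def IsTensOfBots : Formula → Prop
  | .tens _ A B =>
      ((∃ n, A = .bot n) ∨ IsTensOfBots A) ∧ ((∃ n, B = .bot n) ∨ IsTensOfBots B)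
  | _ => False

/-- A basic sequent in normal form: it consists of formulas `1` and
tensor-formulas `⊗(⊥^n)`, `n ≥ 2`. -/
def IsBasicNF (Γ : Sequent) : Prop :=
  ∀ A ∈ Γ, (∃ n, A = Formula.one n) ∨ IsTensOfBots A

end MLL

/-!
A balanced basic sequent decomposes along its outermost connectives: a top-level `⊥` can be
removed without changing the balance; at a top-level `A ⊗ B` the other formulas split into two
balanced halves, `A` taking as many `⊥`-free formulas as it has `⊥`s (balance guarantees there
are enough); otherwise the sequent is a single `1`. This decomposition is read both as a sequent
proof and as a linking in which every removed `⊥` jumps to a name of what remains. Its switching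
graphs grow by attaching a leaf (`⊥`) or by joining two disjoint trees through a new vertex
(`⊗`), so they are trees.
-/

namespace Multiset

theorem card_le_card_filter_eq_zero_add_sum {α : Type*} (f : α → ℕ) (s : Multiset α) :
    card s ≤ card (s.filter (f · = 0)) + (s.map f).sum := by
  induction s using Multiset.induction with
  | empty => simp
  | cons a s ih => by_cases h : f a = 0 <;> simp [h] <;> omega

end Multiset

namespace SimpleGraph

variable {V : Type*} {G G₁ G₂ : SimpleGraph V} {s s₁ s₂ : Set V} {u v a : V}

theorem Walk.edges_subset_edgeSet_left (hG : G ≤ G₁ ⊔ G₂)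
    (hd : Disjoint G₁.support G₂.support) :
    ∀ {u w : V} (p : G.Walk u w), u ∉ G₂.support → ∀ e ∈ p.edges, e ∈ G₁.edgeSet
  | _, _, .nil, _ => by simp
  | _, _, .cons h p, hu => by
    have h₁ := (hG h).resolve_right fun h₂ => hu h₂.mem_support_left
    rw [Walk.edges_cons, List.forall_mem_cons]
    exact ⟨h₁, edges_subset_edgeSet_left hG hd p (Set.disjoint_left.1 hd h₁.mem_support_right)⟩

theorem IsAcyclic.sup_of_disjoint_support (h₁ : G₁.IsAcyclic) (h₂ : G₂.IsAcyclic)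
    (hd : Disjoint G₁.support G₂.support) : (G₁ ⊔ G₂).IsAcyclic := by
  intro x c hc
  by_cases hx : x ∈ G₂.support
  · have hc₂ := c.edges_subset_edgeSet_left (sup_comm G₁ G₂).le hd.symm (Set.disjoint_right.1 hd hx)
    exact h₂ (c.transfer G₂ hc₂) (hc.transfer hc₂)
  · have hc₁ := c.edges_subset_edgeSet_left le_rfl hd hx
    exact h₁ (c.transfer G₁ hc₁) (hc.transfer hc₁)

theorem not_reachable_sup_of_disjoint (hs₁ : G₁.support ⊆ s₁) (hs₂ : G₂.support ⊆ s₂)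
    (hd : Disjoint s₁ s₂) (hu : u ∈ s₁) (hv : v ∈ s₂) : ¬ (G₁ ⊔ G₂).Reachable u v := by
  rintro ⟨p⟩
  have hp := p.edges_subset_edgeSet_left le_rfl (hd.mono hs₁ hs₂)
    fun h => Set.disjoint_left.1 hd hu (hs₂ h)
  have huv : v ≠ u := fun h => Set.disjoint_left.1 hd hu (h ▸ hv)
  exact Set.disjoint_left.1 hd (hs₁ (mem_support_of_reachable huv ⟨(p.transfer G₁ hp).reverse⟩)) hv

structure IsTreeOn (G : SimpleGraph V) (s : Set V) : Prop where
  support_subset : G.support ⊆ s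
  connected_induce : (G.induce s).Connected
  isAcyclic : G.IsAcyclic

theorem IsTreeOn.isTree_induce (h : G.IsTreeOn s) : (G.induce s).IsTree :=
  ⟨h.connected_induce, h.isAcyclic.induce s⟩

theorem isTreeOn_bot_singleton (a : V) : (⊥ : SimpleGraph V).IsTreeOn {a} :=
  ⟨by simp, .of_subsingleton, isAcyclic_bot⟩

theorem IsTreeOn.sup_sup_edge (h₁ : G₁.IsTreeOn s₁) (h₂ : G₂.IsTreeOn s₂) (hd : Disjoint s₁ s₂)
    (hu : u ∈ s₁) (hv : v ∈ s₂) : (G₁ ⊔ G₂ ⊔ edge u v).IsTreeOn (s₁ ∪ s₂) where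
  support_subset := by
    rintro x ⟨y, (hxy | hxy) | hxy⟩
    · exact Or.inl (h₁.support_subset hxy.mem_support_left)
    · exact Or.inr (h₂.support_subset hxy.mem_support_left)
    · rcases (edge_adj ..).1 hxy with ⟨⟨rfl, rfl⟩ | ⟨rfl, rfl⟩, -⟩
      exacts [Or.inl hu, Or.inr hv]
  connected_induce := by
    have huv : (edge u v).Adj u v := (edge_adj ..).2
      ⟨Or.inl ⟨rfl, rfl⟩, fun h => Set.disjoint_left.1 hd hu (h ▸ hv)⟩
    exact connected_induce_union
      (h₁.connected_induce.preconnected.mono (comap_monotone _ (le_sup_left.trans le_sup_left)))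
      (h₂.connected_induce.preconnected.mono (comap_monotone _ (le_sup_right.trans le_sup_left)))
      hu hv (Or.inr huv)
  isAcyclic :=
    (h₁.isAcyclic.sup_of_disjoint_support h₂.isAcyclic
      (hd.mono h₁.support_subset h₂.support_subset)).sup_edge_of_not_reachable
      (not_reachable_sup_of_disjoint h₁.support_subset h₂.support_subset hd hu hv)

theorem IsTreeOn.sup_edge_of_notMem (h : G.IsTreeOn s) (hu : u ∈ s) (ha : a ∉ s) :
    (G ⊔ edge a u).IsTreeOn (insert a s) := by
  simpa [edge_comm, Set.union_singleton] using
    h.sup_sup_edge (isTreeOn_bot_singleton a) (Set.disjoint_singleton_right.2 ha) hu rfl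

end SimpleGraph

namespace MLL

open SimpleGraph

variable {Γ Γ₁ Γ₂ Δ : Sequent} {lk lk' : Linking} {σ : Switching} {A B : Formula} {a n : ℕ}

theorem Formula.names_eq (F : Formula) : F.names = (F.subs.map Formula.name).toFinset := by
  induction F <;> simp [Formula.names, Formula.subs, Formula.name, *]

theorem seqSubs_cons (A : Formula) (Γ : Sequent) :
    seqSubs (A ::ₘ Γ) = (A.subs : Multiset Formula) + seqSubs Γ :=
  Multiset.cons_bind ..

theorem seqNames_eq (Γ : Sequent) : seqNames Γ = ((seqSubs Γ).map Formula.name).toFinset := by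
  induction Γ using Multiset.induction with
  | empty => rfl
  | cons A Γ ih => simp [seqNames, seqSubs_cons, Formula.names_eq, ← ih]

theorem mem_seqNames_of_hasSub {F : Formula} (h : HasSub Γ F) : F.name ∈ seqNames Γ := by
  rw [seqNames_eq, Multiset.mem_toFinset]
  exact Multiset.mem_map_of_mem _ h

theorem IsBotName.mem_seqNames (h : IsBotName Γ a) : a ∈ seqNames Γ :=
  mem_seqNames_of_hasSub h

theorem mem_seqSubs_cons_self (A : Formula) (Γ : Sequent) : A ∈ seqSubs (A ::ₘ Γ) := by
  cases A <;> simp [seqSubs_cons, Formula.subs]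

theorem name_mem_seqNames {F : Formula} (h : F ∈ Γ) : F.name ∈ seqNames Γ := by
  obtain ⟨Δ, rfl⟩ := Multiset.exists_cons_of_mem h
  exact mem_seqNames_of_hasSub (mem_seqSubs_cons_self F Δ)

theorem seqSubs_bot_cons (a : ℕ) (Γ : Sequent) :
    seqSubs (.bot a ::ₘ Γ) = .bot a ::ₘ seqSubs Γ := by
  simp [seqSubs_cons, Formula.subs]

theorem seqSubs_tens_cons_add (n : ℕ) (A B : Formula) (Γ₁ Γ₂ : Sequent) :
    seqSubs (.tens n A B ::ₘ (Γ₁ + Γ₂)) =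
      .tens n A B ::ₘ (seqSubs (A ::ₘ Γ₁) + seqSubs (B ::ₘ Γ₂)) := by
  rw [seqSubs_cons, seqSubs_cons, seqSubs_cons, seqSubs, Multiset.add_bind]
  simp only [Formula.subs, ← Multiset.cons_coe, ← Multiset.coe_add, Multiset.cons_add]
  congr 1
  abel

theorem seqNames_bot_cons (a : ℕ) (Γ : Sequent) :
    seqNames (.bot a ::ₘ Γ) = insert a (seqNames Γ) := by
  simp [seqNames_eq, seqSubs_bot_cons, Formula.name]

theorem seqNames_tens_cons_add (n : ℕ) (A B : Formula) (Γ₁ Γ₂ : Sequent) :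
    seqNames (.tens n A B ::ₘ (Γ₁ + Γ₂)) =
      insert n (seqNames (A ::ₘ Γ₁) ∪ seqNames (B ::ₘ Γ₂)) := by
  rw [seqNames_eq, seqSubs_tens_cons_add, Multiset.map_cons, Multiset.toFinset_cons,
    Multiset.map_add, Multiset.toFinset_add, seqNames_eq, seqNames_eq]
  rfl

theorem wellNamed_bot_cons_iff : WellNamed (.bot a ::ₘ Γ) ↔ a ∉ seqNames Γ ∧ WellNamed Γ := by
  rw [WellNamed, seqSubs_bot_cons, Multiset.map_cons, Multiset.nodup_cons, seqNames_eq,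
    Multiset.mem_toFinset]
  rfl

theorem wellNamed_tens_cons_add_iff :
    WellNamed (.tens n A B ::ₘ (Γ₁ + Γ₂)) ↔
      n ∉ seqNames (A ::ₘ Γ₁) ∪ seqNames (B ::ₘ Γ₂) ∧ WellNamed (A ::ₘ Γ₁) ∧
        WellNamed (B ::ₘ Γ₂) ∧ Disjoint (seqNames (A ::ₘ Γ₁)) (seqNames (B ::ₘ Γ₂)) := by
  rw [WellNamed, seqSubs_tens_cons_add, Multiset.map_cons, Multiset.nodup_cons,
    Multiset.map_add, Multiset.nodup_add, seqNames_eq, seqNames_eq, ← Multiset.toFinset_add,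
    Multiset.mem_toFinset, Multiset.disjoint_toFinset]
  rfl

theorem switchGraph_congr (h : ∀ a, IsBotName Γ a → lk a = lk' a) :
    switchGraph Γ lk σ = switchGraph Γ lk' σ := by
  have : switchAdj Γ lk σ = switchAdj Γ lk' σ := by
    ext x y
    exact or_congr_right (or_congr_right (and_congr_right fun hx => by rw [h x hx]))
  rw [switchGraph, switchGraph, this]

theorem switchGraph_one (m : ℕ) : switchGraph {.one m} lk σ = ⊥ := by
  ext x y
  simp [switchGraph, switchAdj, IsBotName, HasSub, seqSubs, Formula.subs]

theorem switchAdj_bot_cons {x y : ℕ} :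
    switchAdj (.bot a ::ₘ Γ) lk σ x y ↔ switchAdj Γ lk σ x y ∨ x = a ∧ y = lk a := by
  simp only [switchAdj, IsBotName, HasSub, seqSubs_bot_cons, Multiset.mem_cons, reduceCtorEq,
    false_or, Formula.bot.injEq]
  grind

theorem switchAdj_tens_cons_add {x y : ℕ} :
    switchAdj (.tens n A B ::ₘ (Γ₁ + Γ₂)) lk σ x y ↔
      (x = n ∧ (y = A.name ∨ y = B.name)) ∨ switchAdj (A ::ₘ Γ₁) lk σ x y ∨
        switchAdj (B ::ₘ Γ₂) lk σ x y := by
  simp only [switchAdj, IsBotName, HasSub, seqSubs_tens_cons_add, Multiset.mem_cons,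
    Multiset.mem_add, reduceCtorEq, false_or, Formula.tens.injEq, or_and_right, exists_or,
    and_assoc, exists_and_left, exists_eq_left]
  grind

theorem switchGraph_bot_cons :
    switchGraph (.bot a ::ₘ Γ) lk σ = switchGraph Γ lk σ ⊔ edge a (lk a) := by
  ext x y
  simp only [switchGraph, sup_adj, fromRel_adj, edge_adj, switchAdj_bot_cons]
  tauto

theorem switchGraph_tens_cons_add :
    switchGraph (.tens n A B ::ₘ (Γ₁ + Γ₂)) lk σ =
      switchGraph (A ::ₘ Γ₁) lk σ ⊔ edge n A.name ⊔ switchGraph (B ::ₘ Γ₂) lk σ ⊔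
        edge n B.name := by
  ext x y
  simp only [switchGraph, sup_adj, fromRel_adj, edge_adj, switchAdj_tens_cons_add]
  tauto

theorem validLinking_of_support_subset
    (h : (switchGraph Γ lk σ).support ⊆ seqNames Γ) : ValidLinking Γ lk := by
  intro b hb
  by_cases hlk : lk b = b
  · rw [hlk]
    exact mem_seqNames_of_hasSub hb
  · have hadj : (switchGraph Γ lk σ).Adj b (lk b) :=
      (fromRel_adj ..).2 ⟨Ne.symm hlk, .inl (.inr (.inr ⟨hb, rfl⟩))⟩
    exact h hadj.mem_support_right

theorem IsBasicFormula.parrCount_eq_zero {F : Formula} (h : IsBasicFormula F) :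
    F.parrCount = 0 := by
  induction F with
  | one | bot => rfl
  | parr => exact h.elim
  | tens _ _ _ ihA ihB => simp [Formula.parrCount, ihA h.1, ihB h.2]

theorem balance_of_isBasic (hB : IsBasic Γ) :
    balance Γ = (Γ.map Formula.botCount).sum - Multiset.card Γ + 1 := by
  have : (Γ.map Formula.parrCount).sum = 0 :=
    Multiset.sum_eq_zero fun _ hk => by
      obtain ⟨F, hF, rfl⟩ := Multiset.mem_map.1 hk
      exact (hB F hF).parrCount_eq_zero
  rw [balance, this]
  ring

theorem balance_bot_cons (a : ℕ) (Γ : Sequent) : balance (.bot a ::ₘ Γ) = balance Γ := by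
  simp only [balance, Multiset.map_cons, Multiset.sum_cons, Multiset.card_cons,
    Formula.botCount, Formula.parrCount]
  push_cast
  ring

theorem ne_zero_of_balance_eq_zero (h : balance Γ = 0) : Γ ≠ 0 := by
  rintro rfl
  simp [balance] at h

theorem IsBasic.tens_cons_add (hB : IsBasic (.tens n A B ::ₘ (Γ₁ + Γ₂))) :
    IsBasic (A ::ₘ Γ₁) ∧ IsBasic (B ::ₘ Γ₂) := by
  simp_all [IsBasic, IsBasicFormula, or_imp, forall_and]

theorem exists_split_of_balance_tens_cons (hB : IsBasic (.tens n A B ::ₘ Δ))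
    (h : balance (.tens n A B ::ₘ Δ) = 0) :
    ∃ Γ₁ Γ₂, Δ = Γ₁ + Γ₂ ∧ balance (A ::ₘ Γ₁) = 0 ∧ balance (B ::ₘ Γ₂) = 0 := by
  classical
  have hcount : Multiset.card Δ = A.botCount + B.botCount + (Δ.map Formula.botCount).sum := by
    rw [balance_of_isBasic hB] at h
    simp only [Multiset.map_cons, Multiset.sum_cons, Multiset.card_cons, Formula.botCount] at h
    omega
  have hZ : A.botCount ≤ Multiset.card (Δ.filter (·.botCount = 0)) := by
    have := Δ.card_le_card_filter_eq_zero_add_sum Formula.botCount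
    omega
  obtain ⟨Γ₁, hΓ₁⟩ := Multiset.card_pos_iff_exists_mem.1 <| by
    rw [Multiset.card_powersetCard]
    exact Nat.choose_pos hZ
  obtain ⟨hΓ₁Z, hcard₁⟩ := Multiset.mem_powersetCard.1 hΓ₁
  obtain ⟨Γ₂, rfl⟩ := Multiset.le_iff_exists_add.1 (hΓ₁Z.trans (Multiset.filter_le _ _))
  have hbot₁ : (Γ₁.map Formula.botCount).sum = 0 :=
    Multiset.sum_eq_zero fun _ hk => by
      obtain ⟨F, hF, rfl⟩ := Multiset.mem_map.1 hk
      exact (Multiset.mem_filter.1 (Multiset.mem_of_le hΓ₁Z hF)).2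
  obtain ⟨hB₁, hB₂⟩ := hB.tens_cons_add
  refine ⟨Γ₁, Γ₂, rfl, ?_, ?_⟩
  · simp [balance_of_isBasic hB₁, hbot₁, hcard₁]
  · simp only [Multiset.map_add, Multiset.sum_add, Multiset.card_add, hbot₁] at hcount
    simp only [balance_of_isBasic hB₂, Multiset.map_cons, Multiset.sum_cons, Multiset.card_cons]
    omega

theorem IsBasic.eq_one_or_bot_cons_or_tens_cons (hB : IsBasic Γ) (h : balance Γ = 0) :
    (∃ m, Γ = {.one m}) ∨ (∃ a Δ, Γ = .bot a ::ₘ Δ) ∨ ∃ n A B Δ, Γ = .tens n A B ::ₘ Δ := by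
  by_cases hbot : ∃ a, .bot a ∈ Γ
  · obtain ⟨a, ha⟩ := hbot
    exact .inr (.inl ⟨a, Multiset.exists_cons_of_mem ha⟩)
  by_cases htens : ∃ n A B, .tens n A B ∈ Γ
  · obtain ⟨n, A, B, hT⟩ := htens
    exact .inr (.inr ⟨n, A, B, Multiset.exists_cons_of_mem hT⟩)
  push Not at hbot htens
  have hone : ∀ F ∈ Γ, ∃ m, F = .one m := by
    intro F hF
    cases F with
    | one m => exact ⟨m, rfl⟩
    | bot a => exact absurd hF (hbot a)
    | parr => exact (hB _ hF).elim
    | tens n A B => exact absurd hF (htens n A B)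
  have hsum : (Γ.map Formula.botCount).sum = 0 :=
    Multiset.sum_eq_zero fun _ hk => by
      obtain ⟨F, hF, rfl⟩ := Multiset.mem_map.1 hk
      obtain ⟨m, rfl⟩ := hone F hF
      rfl
  rw [balance_of_isBasic hB, hsum] at h
  obtain ⟨F, rfl⟩ := Multiset.card_eq_one.1 (show Multiset.card Γ = 1 by omega)
  obtain ⟨m, rfl⟩ := hone F (Multiset.mem_singleton_self F)
  exact .inl ⟨m, rfl⟩

@[elab_as_elim]
theorem IsBasic.induction_of_balance_eq_zero {motive : Sequent → Prop}
    (one : ∀ m, motive {.one m})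
    (bot : ∀ a Γ, Γ ≠ 0 → motive Γ → motive (.bot a ::ₘ Γ))
    (tens : ∀ n A B Γ₁ Γ₂, motive (A ::ₘ Γ₁) → motive (B ::ₘ Γ₂) →
      motive (.tens n A B ::ₘ (Γ₁ + Γ₂)))
    (hB : IsBasic Γ) (h : balance Γ = 0) : motive Γ := by
  induction hN : Multiset.card (seqSubs Γ) using Nat.strong_induction_on generalizing Γ with
  | _ N ih =>
  subst hN
  rcases hB.eq_one_or_bot_cons_or_tens_cons h with ⟨m, rfl⟩ | ⟨a, Δ, rfl⟩ | ⟨n, A, B, Δ, rfl⟩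
  · exact one m
  · rw [balance_bot_cons] at h
    refine bot a Δ (ne_zero_of_balance_eq_zero h)
      (ih _ ?_ (fun F hF => hB F (Multiset.mem_cons_of_mem hF)) h rfl)
    simp [seqSubs_bot_cons]
  · obtain ⟨Γ₁, Γ₂, rfl, h₁, h₂⟩ := exists_split_of_balance_tens_cons hB h
    obtain ⟨hB₁, hB₂⟩ := hB.tens_cons_add
    have hsize := congrArg Multiset.card (seqSubs_tens_cons_add n A B Γ₁ Γ₂)
    have hpos₁ := Multiset.card_pos_iff_exists_mem.2 ⟨A, mem_seqSubs_cons_self A Γ₁⟩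
    have hpos₂ := Multiset.card_pos_iff_exists_mem.2 ⟨B, mem_seqSubs_cons_self B Γ₂⟩
    rw [Multiset.card_cons, Multiset.card_add] at hsize
    exact tens n A B Γ₁ Γ₂ (ih _ (by omega) hB₁ h₁ rfl) (ih _ (by omega) hB₂ h₂ rfl)

theorem nonempty_proof_of_balance_eq_zero (hB : IsBasic Γ) (h : balance Γ = 0) :
    Nonempty (Proof Γ) :=
  hB.induction_of_balance_eq_zero (fun m => ⟨.one m⟩) (fun a _ _ ⟨π⟩ => ⟨.bot a π⟩)
    (fun n _ _ _ _ ⟨π₁⟩ ⟨π₂⟩ => ⟨.tens n π₁ π₂⟩) h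

def IsTreeLinking (Γ : Sequent) (lk : Linking) : Prop :=
  ∀ σ, (switchGraph Γ lk σ).IsTreeOn (seqNames Γ)

theorem IsTreeLinking.correct (h : IsTreeLinking Γ lk) : Correct Γ lk :=
  ⟨validLinking_of_support_subset (h default).support_subset, fun σ => (h σ).isTree_induce⟩

theorem isTreeLinking_one (m : ℕ) (lk : Linking) : IsTreeLinking {.one m} lk := by
  intro σ
  rw [switchGraph_one, show seqNames {.one m} = {m} by rfl, Finset.coe_singleton]
  exact isTreeOn_bot_singleton m

theorem IsTreeLinking.bot_cons (h : IsTreeLinking Γ lk) (ha : a ∉ seqNames Γ) {r : ℕ}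
    (hr : r ∈ seqNames Γ) : IsTreeLinking (.bot a ::ₘ Γ) (Function.update lk a r) := by
  intro σ
  have hlk : ∀ b, IsBotName Γ b → Function.update lk a r b = lk b := fun b hb =>
    Function.update_of_ne (ne_of_mem_of_not_mem hb.mem_seqNames ha) ..
  rw [switchGraph_bot_cons, Function.update_self, switchGraph_congr hlk, seqNames_bot_cons,
    Finset.coe_insert]
  exact (h σ).sup_edge_of_notMem hr ha

theorem IsTreeLinking.tens_cons_add [DecidablePred (· ∈ seqNames (A ::ₘ Γ₁))] {lk₁ lk₂ : Linking}
    (h₁ : IsTreeLinking (A ::ₘ Γ₁) lk₁) (h₂ : IsTreeLinking (B ::ₘ Γ₂) lk₂)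
    (hW : WellNamed (.tens n A B ::ₘ (Γ₁ + Γ₂))) :
    IsTreeLinking (.tens n A B ::ₘ (Γ₁ + Γ₂)) ((seqNames (A ::ₘ Γ₁)).piecewise lk₁ lk₂) := by
  obtain ⟨hn, -, -, hd⟩ := wellNamed_tens_cons_add_iff.1 hW
  rw [Finset.mem_union, not_or] at hn
  have hlk₁ : ∀ b, IsBotName (A ::ₘ Γ₁) b → (seqNames (A ::ₘ Γ₁)).piecewise lk₁ lk₂ b = lk₁ b :=
    fun b hb => Finset.piecewise_eq_of_mem _ _ _ hb.mem_seqNames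
  have hlk₂ : ∀ b, IsBotName (B ::ₘ Γ₂) b → (seqNames (A ::ₘ Γ₁)).piecewise lk₁ lk₂ b = lk₂ b :=
    fun b hb => Finset.piecewise_eq_of_notMem _ _ _ (Finset.disjoint_right.1 hd hb.mem_seqNames)
  intro σ
  rw [switchGraph_tens_cons_add, switchGraph_congr hlk₁, switchGraph_congr hlk₂,
    seqNames_tens_cons_add, Finset.coe_insert, Finset.coe_union, ← Set.insert_union]
  have hA := name_mem_seqNames (Multiset.mem_cons_self A Γ₁)
  have hB := name_mem_seqNames (Multiset.mem_cons_self B Γ₂)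
  exact ((h₁ σ).sup_edge_of_notMem hA hn.1).sup_sup_edge (h₂ σ)
    (Set.disjoint_insert_left.2 ⟨hn.2, Finset.disjoint_coe.2 hd⟩) (Set.mem_insert n _) hB

theorem exists_isTreeLinking (hW : WellNamed Γ) (hB : IsBasic Γ) (h : balance Γ = 0) :
    ∃ lk, IsTreeLinking Γ lk := by
  classical
  revert hW
  refine hB.induction_of_balance_eq_zero ?_ ?_ ?_ h
  · exact fun m _ => ⟨id, isTreeLinking_one m id⟩
  · intro a Γ hΓ ih hW
    obtain ⟨ha, hW'⟩ := wellNamed_bot_cons_iff.1 hW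
    obtain ⟨lk, hlk⟩ := ih hW'
    obtain ⟨F, hF⟩ := Multiset.exists_mem_of_ne_zero hΓ
    exact ⟨_, hlk.bot_cons ha (name_mem_seqNames hF)⟩
  · intro n A B Γ₁ Γ₂ ih₁ ih₂ hW
    obtain ⟨-, hW₁, hW₂, -⟩ := wellNamed_tens_cons_add_iff.1 hW
    obtain ⟨lk₁, h₁⟩ := ih₁ hW₁
    obtain ⟨lk₂, h₂⟩ := ih₂ hW₂
    exact ⟨_, h₁.tens_cons_add h₂ hW⟩

end MLL

open MLL in
/-- A balanced basic sequent is inhabited: it admits a cut-free,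
identity-free unit-only MLL proof, and equivalently a correct linking. -/
theorem mll_balanced_basic_inhabited {Γ : Sequent} (hW : WellNamed Γ)
    (hB : IsBasic Γ) (h : balance Γ = 0) :
    Nonempty (Proof Γ) ∧ ∃ lk : Linking, Correct Γ lk := by
  obtain ⟨lk, hlk⟩ := exists_isTreeLinking hW hB h
  exact ⟨nonempty_proof_of_balance_eq_zero hB h, lk, hlk.correct⟩
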